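/- arXiv:2311.18437 — 2 statements merged into one kernel-verified Lean document; each statement's English description precedes it below -/
import Mathlib

section
/- Let q ∈ (0,1), n ≥ 1 and k ∈ {0,…,n}. If S_n is a binomial random variable with parameters n and q, then e^{-n·kl(k/n, q)}/(n+1) ≤ P(S_n = k) ≤ e^{-n·kl(k/n, q)}, where kl(p,q) = p·log(p/q) + (1-p)·log((1-p)/(1-q)). -/
/-!
Put `p = k / n` and `b_p(j) = C(n,j) p^j (1-p)^(n-j)`. Tilting from `p` to `q` gives the exact
identity `b_q(k) = exp(-n kl(p,q)) b_p(k)`, so it suffices to show `1/(n+1) ≤ b_p(k) ≤ 1`.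
The upper bound holds because the `n + 1` weights `b_p(j)` sum to `1`; the lower bound because
`k ≤ (n+1)p ≤ k+1` makes `k` a mode of `Binomial(n, p)`, so `b_p(k)` is the largest of them.
-/

/-- Kullback–Leibler divergence between Bernoulli(p) and Bernoulli(q)
(with Lean's convention `Real.log 0 = 0`, so the cases p ∈ {0,1} behave as usual). -/
noncomputable def bernKL (p q : ℝ) : ℝ :=
  p * Real.log (p / q) + (1 - p) * Real.log ((1 - p) / (1 - q))

open Finset Real

noncomputable def binomialWeight (n : ℕ) (p : ℝ) (j : ℕ) : ℝ :=
  n.choose j * p ^ j * (1 - p) ^ (n - j)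

section binomialWeight

variable {n : ℕ} {p : ℝ}

theorem sum_binomialWeight (n : ℕ) (p : ℝ) :
    ∑ j ∈ range (n + 1), binomialWeight n p j = 1 := by
  simpa [binomialWeight, mul_comm, mul_left_comm, mul_assoc] using (add_pow p (1 - p) n).symm

theorem binomialWeight_nonneg (hp0 : 0 ≤ p) (hp1 : p ≤ 1) (j : ℕ) :
    0 ≤ binomialWeight n p j := by
  have : 0 ≤ 1 - p := sub_nonneg.2 hp1
  unfold binomialWeight
  positivity

theorem binomialWeight_le_one (hp0 : 0 ≤ p) (hp1 : p ≤ 1) {j : ℕ} (hj : j ≤ n) :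
    binomialWeight n p j ≤ 1 :=
  sum_binomialWeight n p ▸ single_le_sum (fun i _ ↦ binomialWeight_nonneg hp0 hp1 i)
    (mem_range.2 (Nat.lt_succ_of_le hj))

theorem binomialWeight_succ_mul {j : ℕ} (hj : j < n) :
    binomialWeight n p (j + 1) * ((j + 1) * (1 - p)) =
      binomialWeight n p j * ((n - j : ℕ) * p) := by
  have hchoose : (n.choose (j + 1) : ℝ) * (j + 1) = n.choose j * (n - j : ℕ) := by
    exact_mod_cast Nat.choose_succ_right_eq n j
  have hpow : (1 - p) ^ (n - j) = (1 - p) ^ (n - (j + 1)) * (1 - p) := by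
    rw [← pow_succ]; congr 1; omega
  unfold binomialWeight
  rw [hpow, pow_succ]
  linear_combination (p ^ j * p * (1 - p) ^ (n - (j + 1)) * (1 - p)) * hchoose

theorem binomialWeight_le_succ (hp0 : 0 ≤ p) (hp1 : p ≤ 1) {j : ℕ} (hj : j < n)
    (hjp : j + 1 ≤ (n + 1) * p) :
    binomialWeight n p j ≤ binomialWeight n p (j + 1) := by
  have hnj : ((n - j : ℕ) : ℝ) = n - j := by push_cast [hj.le]; ring
  have hjn : (j : ℝ) < n := by exact_mod_cast hj
  have hp : 0 < p := by nlinarith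
  have hpos : 0 < ((n - j : ℕ) : ℝ) * p := by
    rw [hnj]; exact mul_pos (sub_pos.2 hjn) hp
  refine le_of_mul_le_mul_right ?_ hpos
  rw [← binomialWeight_succ_mul hj]
  refine mul_le_mul_of_nonneg_left ?_ (binomialWeight_nonneg hp0 hp1 _)
  rw [hnj]; linarith

theorem binomialWeight_succ_le (hp0 : 0 ≤ p) {j : ℕ} (hj : j < n)
    (hjp : (n + 1) * p ≤ j + 1) :
    binomialWeight n p (j + 1) ≤ binomialWeight n p j := by
  have hnj : ((n - j : ℕ) : ℝ) = n - j := by push_cast [hj.le]; ring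
  have hjn : (j : ℝ) + 1 ≤ n := by exact_mod_cast hj
  have hpos : 0 < ((j : ℝ) + 1) * (1 - p) := by nlinarith
  refine le_of_mul_le_mul_right ?_ hpos
  rw [binomialWeight_succ_mul hj]
  refine mul_le_mul_of_nonneg_left ?_ (binomialWeight_nonneg hp0 (by nlinarith) _)
  rw [hnj]; linarith

theorem binomialWeight_le_mode (hp0 : 0 ≤ p) (hp1 : p ≤ 1) {k : ℕ} (hkn : k ≤ n)
    (hk : k ≤ (n + 1) * p) (hk' : (n + 1) * p ≤ k + 1) {j : ℕ} (hj : j ≤ n) :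
    binomialWeight n p j ≤ binomialWeight n p k := by
  rcases le_total j k with hjk | hkj
  · refine monotoneOn_of_le_succ (s := Set.Iic k) Set.ordConnected_Iic ?_
      hjk Set.self_mem_Iic hjk
    intro i _ _ hi
    rw [Order.succ_eq_add_one, Set.mem_Iic] at hi
    rw [Order.succ_eq_add_one]
    have hi' : (i : ℝ) + 1 ≤ k := by exact_mod_cast hi
    exact binomialWeight_le_succ hp0 hp1 (by omega) (by linarith)
  · refine antitoneOn_of_succ_le (s := Set.Icc k n) Set.ordConnected_Icc ?_
      ⟨le_rfl, hkn⟩ ⟨hkj, hj⟩ hkj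
    intro i _ hi hi1
    rw [Order.succ_eq_add_one] at hi1 ⊢
    have hi' : (k : ℝ) ≤ i := by exact_mod_cast hi.1
    exact binomialWeight_succ_le hp0 (Nat.lt_of_succ_le hi1.2) (by linarith)

theorem one_le_succ_mul_binomialWeight_mode {k : ℕ}
    (hmode : ∀ j ≤ n, binomialWeight n p j ≤ binomialWeight n p k) :
    1 ≤ (n + 1) * binomialWeight n p k := by
  calc (1 : ℝ) = ∑ j ∈ range (n + 1), binomialWeight n p j := (sum_binomialWeight n p).symm
    _ ≤ ∑ _j ∈ range (n + 1), binomialWeight n p k :=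
      sum_le_sum fun j hj ↦ hmode j (Nat.lt_succ_iff.1 (mem_range.1 hj))
    _ = (n + 1) * binomialWeight n p k := by simp

end binomialWeight

theorem exp_neg_mul_log_div_mul_pow {x y : ℝ} (hx : 0 ≤ x) (hy : 0 < y) {m : ℕ}
    (hxm : x = 0 → m = 0) :
    exp (-(m * log (x / y))) * x ^ m = y ^ m := by
  rcases hx.eq_or_lt with rfl | hx
  · simp [hxm rfl]
  · rw [← log_pow, ← log_inv, exp_log (by positivity), div_pow, inv_div]
    field_simp

theorem exp_neg_mul_bernKL_mul_binomialWeight {n k : ℕ} {p q : ℝ} (hp0 : 0 ≤ p) (hp1 : p ≤ 1)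
    (hk : k ≤ n) (hnp : n * p = k) (hq : q ∈ Set.Ioo (0 : ℝ) 1) :
    exp (-n * bernKL p q) * binomialWeight n p k = binomialWeight n q k := by
  have hnp' : n * (1 - p) = (n - k : ℕ) := by push_cast [hk]; linarith
  have hsplit : -n * bernKL p q =
      -(k * log (p / q)) + -((n - k : ℕ) * log ((1 - p) / (1 - q))) := by
    rw [bernKL, ← hnp, ← hnp']; ring
  have hk0 : p = 0 → k = 0 := fun h ↦ by
    rw [h, mul_zero] at hnp; exact_mod_cast hnp.symm
  have hnk0 : 1 - p = 0 → n - k = 0 := fun h ↦ by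
    rw [h, mul_zero] at hnp'; exact_mod_cast hnp'.symm
  calc _ = n.choose k * (exp (-(k * log (p / q))) * p ^ k) *
        (exp (-((n - k : ℕ) * log ((1 - p) / (1 - q)))) * (1 - p) ^ (n - k)) := by
        rw [hsplit, exp_add, binomialWeight]; ring
    _ = binomialWeight n q k := by
      rw [exp_neg_mul_log_div_mul_pow hp0 hq.1 hk0,
        exp_neg_mul_log_div_mul_pow (sub_nonneg.2 hp1) (sub_pos.2 hq.2) hnk0, binomialWeight]

theorem binomial_pmf_kl_bounds (q : ℝ) (hq : q ∈ Set.Ioo (0 : ℝ) 1)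
    (n k : ℕ) (hn : 1 ≤ n) (hk : k ≤ n) :
    Real.exp (-(n : ℝ) * bernKL (k / n) q) / (n + 1) ≤
      (n.choose k : ℝ) * q ^ k * (1 - q) ^ (n - k) ∧
    (n.choose k : ℝ) * q ^ k * (1 - q) ^ (n - k) ≤
      Real.exp (-(n : ℝ) * bernKL (k / n) q) := by
  set p : ℝ := k / n
  have hn0 : (0 : ℝ) < n := by exact_mod_cast hn
  have hkn : (k : ℝ) ≤ n := by exact_mod_cast hk
  have hnp : n * p = k := mul_div_cancel₀ _ hn0.ne'
  have hp0 : 0 ≤ p := by positivity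
  have hp1 : p ≤ 1 := div_le_one_of_le₀ hkn hn0.le
  have hmode : ∀ j ≤ n, binomialWeight n p j ≤ binomialWeight n p k :=
    fun j ↦ binomialWeight_le_mode hp0 hp1 hk (by linarith) (by linarith)
  have hexp : 0 < exp (-n * bernKL p q) := exp_pos _
  change _ ≤ binomialWeight n q k ∧ binomialWeight n q k ≤ _
  rw [← exp_neg_mul_bernKL_mul_binomialWeight hp0 hp1 hk hnp hq]
  constructor
  · rw [div_le_iff₀ (by positivity), mul_assoc, mul_comm (binomialWeight n p k)]
    exact le_mul_of_one_le_right hexp.le (one_le_succ_mul_binomialWeight_mode hmode)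
  · exact mul_le_of_le_one_right hexp.le (binomialWeight_le_one hp0 hp1 hk)
end

section
/- Let q ∈ (0,1), n ≥ 1, and ε > 1/n with q - ε - 1/n ≥ 0. If S_n ~ Binomial(n,q), then P(S_n ≤ n(q-ε)) ≥ e^{-n·kl(q-ε-1/n, q)}/(n+1). -/
private lemma bt_step_up {n k j : ℕ} (hk : k ≤ n) (hj : j < k) :
    n.choose j * k^j * (n-k)^(n-j) ≤ n.choose (j+1) * k^(j+1) * (n-k)^(n-(j+1)) := by
  apply Nat.le_of_mul_le_mul_right (c := j+1) _ (Nat.succ_pos j)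
  have hc : n.choose (j+1) * (j+1) = n.choose j * (n - j) := Nat.choose_succ_right_eq n j
  have key : (j+1) * (n-k) ≤ k * (n-j) := Nat.mul_le_mul (by omega) (by omega)
  have e1 : n.choose j * k^j * (n-k)^(n-j) * (j+1)
      = (n.choose j * k^j * (n-k)^(n-(j+1))) * ((j+1)*(n-k)) := by
    rw [show n - j = (n-(j+1))+1 from by omega, pow_succ]; ring
  have e2 : n.choose (j+1) * k^(j+1) * (n-k)^(n-(j+1)) * (j+1)
      = (n.choose j * k^j * (n-k)^(n-(j+1))) * (k*(n-j)) := by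
    have h : n.choose (j+1) * k^(j+1) * (n-k)^(n-(j+1)) * (j+1)
        = (n.choose (j+1) * (j+1)) * (k^j * k * (n-k)^(n-(j+1))) := by
      rw [pow_succ]; ring
    rw [h, hc]; ring
  rw [e1, e2]
  exact Nat.mul_le_mul_left _ key

private lemma bt_step_down {n k j : ℕ} (hj : k ≤ j) (hjn : j < n) :
    n.choose (j+1) * k^(j+1) * (n-k)^(n-(j+1)) ≤ n.choose j * k^j * (n-k)^(n-j) := by
  apply Nat.le_of_mul_le_mul_right (c := j+1) _ (Nat.succ_pos j)
  have hc : n.choose (j+1) * (j+1) = n.choose j * (n - j) := Nat.choose_succ_right_eq n j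
  have key : k * (n-j) ≤ (j+1) * (n-k) := Nat.mul_le_mul (by omega) (by omega)
  have e1 : n.choose j * k^j * (n-k)^(n-j) * (j+1)
      = (n.choose j * k^j * (n-k)^(n-(j+1))) * ((j+1)*(n-k)) := by
    rw [show n - j = (n-(j+1))+1 from by omega, pow_succ]; ring
  have e2 : n.choose (j+1) * k^(j+1) * (n-k)^(n-(j+1)) * (j+1)
      = (n.choose j * k^j * (n-k)^(n-(j+1))) * (k*(n-j)) := by
    have h : n.choose (j+1) * k^(j+1) * (n-k)^(n-(j+1)) * (j+1)
        = (n.choose (j+1) * (j+1)) * (k^j * k * (n-k)^(n-(j+1))) := by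
      rw [pow_succ]; ring
    rw [h, hc]; ring
  rw [e1, e2]
  exact Nat.mul_le_mul_left _ key

private lemma bt_le_max {n k : ℕ} (hk : k ≤ n) (j : ℕ) :
    n.choose j * k^j * (n-k)^(n-j) ≤ n.choose k * k^k * (n-k)^(n-k) := by
  rcases le_or_gt j k with h | h
  · have aux : ∀ d, n.choose (k-d) * k^(k-d) * (n-k)^(n-(k-d))
        ≤ n.choose k * k^k * (n-k)^(n-k) := by
      intro d
      induction d with
      | zero => simp
      | succ d ih =>
        rcases le_or_gt k d with hd | hd
        · rw [show k - (d+1) = k - d from by omega]; exact ih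
        · have hlt : k - (d+1) < k := by omega
          have h2 : (k - (d+1)) + 1 = k - d := by omega
          calc n.choose (k-(d+1)) * k^(k-(d+1)) * (n-k)^(n-(k-(d+1)))
              ≤ n.choose ((k-(d+1))+1) * k^((k-(d+1))+1) * (n-k)^(n-((k-(d+1))+1)) :=
                bt_step_up hk hlt
            _ = n.choose (k-d) * k^(k-d) * (n-k)^(n-(k-d)) := by rw [h2]
            _ ≤ _ := ih
    have := aux (k - j)
    rwa [show k - (k - j) = j from by omega] at this
  · have aux : ∀ d, n.choose (k+d) * k^(k+d) * (n-k)^(n-(k+d))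
        ≤ n.choose k * k^k * (n-k)^(n-k) := by
      intro d
      induction d with
      | zero => simp
      | succ d ih =>
        rcases lt_or_ge (k + d) n with hd | hd
        · calc n.choose (k+(d+1)) * k^(k+(d+1)) * (n-k)^(n-(k+(d+1)))
              = n.choose ((k+d)+1) * k^((k+d)+1) * (n-k)^(n-((k+d)+1)) := by ring_nf
            _ ≤ n.choose (k+d) * k^(k+d) * (n-k)^(n-(k+d)) := bt_step_down (by omega) hd
            _ ≤ _ := ih
        · have hz : n.choose (k + (d+1)) = 0 := Nat.choose_eq_zero_of_lt (by omega)
          rw [hz]; simp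
    have := aux (j - k)
    rwa [show k + (j - k) = j from by omega] at this

private lemma pmf_max_ge (n k : ℕ) (hn : 1 ≤ n) (hk : k ≤ n) :
    (1:ℝ)/(n+1) ≤ (n.choose k : ℝ) * ((k:ℝ)/n)^k * (1 - (k:ℝ)/n)^(n-k) := by
  have hn0 : (0:ℝ) < n := by exact_mod_cast hn
  have h1r : 1 - (k:ℝ)/n = ((n-k : ℕ):ℝ)/n := by
    rw [Nat.cast_sub hk]; field_simp
  have term_eq : ∀ j, j ≤ n →
      ((k:ℝ)/n)^j * (1 - (k:ℝ)/n)^(n-j) * (n.choose j) =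
      ((n.choose j * k^j * (n-k)^(n-j) : ℕ) : ℝ) / (n:ℝ)^n := by
    intro j hj
    rw [show 1 - (k:ℝ)/n = ((n-k : ℕ):ℝ)/n from h1r, div_pow, div_pow]
    push_cast
    rw [div_mul_div_comm, ← pow_add, Nat.add_sub_cancel' hj]
    ring
  have hsum : ∑ j ∈ Finset.range (n+1),
      ((k:ℝ)/n)^j * (1 - (k:ℝ)/n)^(n-j) * (n.choose j) = 1 := by
    rw [← add_pow]; simp
  have hmax : ∀ j ∈ Finset.range (n+1),
      ((k:ℝ)/n)^j * (1 - (k:ℝ)/n)^(n-j) * (n.choose j) ≤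
      ((k:ℝ)/n)^k * (1 - (k:ℝ)/n)^(n-k) * (n.choose k) := by
    intro j hj
    rw [term_eq j (by simpa [Nat.lt_succ_iff] using hj), term_eq k hk]
    exact (div_le_div_iff_of_pos_right (by positivity)).mpr
      (by exact_mod_cast bt_le_max hk j)
  have key : (1:ℝ) ≤ (n+1) * (((k:ℝ)/n)^k * (1 - (k:ℝ)/n)^(n-k) * (n.choose k)) := by
    calc (1:ℝ) = ∑ j ∈ Finset.range (n+1),
        ((k:ℝ)/n)^j * (1 - (k:ℝ)/n)^(n-j) * (n.choose j) := hsum.symm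
      _ ≤ ∑ j ∈ Finset.range (n+1),
          ((k:ℝ)/n)^k * (1 - (k:ℝ)/n)^(n-k) * (n.choose k) :=
        Finset.sum_le_sum hmax
      _ = (n+1) * (((k:ℝ)/n)^k * (1 - (k:ℝ)/n)^(n-k) * (n.choose k)) := by
        rw [Finset.sum_const, Finset.card_range]; push_cast; ring
  rw [div_le_iff₀ (by positivity)]
  calc (1:ℝ) ≤ _ := key
    _ = (n.choose k : ℝ) * ((k:ℝ)/n)^k * (1 - (k:ℝ)/n)^(n-k) * (n+1) := by ring

private lemma bernKL_anti {q a b : ℝ} (hq0 : 0 < q) (hq1 : q < 1)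
    (ha : 0 ≤ a) (hab : a ≤ b) (hb : b ≤ q) : bernKL b q ≤ bernKL a q := by
  set f : ℝ → ℝ := fun x =>
    x * Real.log x + (1-x) * Real.log (1-x) - x * Real.log q - (1-x) * Real.log (1-q)
    with hf
  have h1q : (0:ℝ) < 1 - q := by linarith
  have heq : ∀ x ∈ Set.Icc (0:ℝ) q, bernKL x q = f x := by
    rintro x ⟨hx0, hxq⟩
    have h1x : (0:ℝ) < 1 - x := by linarith
    unfold bernKL
    have e2 : (1-x) * Real.log ((1-x)/(1-q))
        = (1-x) * Real.log (1-x) - (1-x) * Real.log (1-q) := by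
      rw [Real.log_div (ne_of_gt h1x) (ne_of_gt h1q)]; ring
    rcases eq_or_lt_of_le hx0 with h0 | h0
    · rw [← h0]; simp [hf, one_div, Real.log_inv]
    · rw [Real.log_div (ne_of_gt h0) (ne_of_gt hq0), e2, hf]; ring
  have h1 : Continuous fun x : ℝ => (1-x) * Real.log (1-x) :=
    Real.continuous_mul_log.comp (continuous_const.sub continuous_id)
  have hcont : Continuous f :=
    ((Real.continuous_mul_log.add h1).sub (continuous_id.mul continuous_const)).sub
      ((continuous_const.sub continuous_id).mul continuous_const)
  have hderiv : ∀ x ∈ Set.Ioo (0:ℝ) q,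
      HasDerivAt f (Real.log x - Real.log (1-x) - Real.log q + Real.log (1-q)) x := by
    rintro x ⟨hx0, hxq⟩
    have h1x : (0:ℝ) < 1 - x := by linarith
    have hinner : HasDerivAt (fun y : ℝ => 1 - y) (-1) x := (hasDerivAt_id x).const_sub 1
    have h2 : HasDerivAt (fun y : ℝ => (1-y) * Real.log (1-y))
        ((Real.log (1-x) + 1) * (-1)) x :=
      (Real.hasDerivAt_mul_log (ne_of_gt h1x)).comp x hinner
    have h3 : HasDerivAt (fun y : ℝ => y * Real.log q) (Real.log q) x := by
      simpa using (hasDerivAt_id x).mul_const (Real.log q)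
    have h4 : HasDerivAt (fun y : ℝ => (1-y) * Real.log (1-q)) ((-1) * Real.log (1-q)) x :=
      hinner.mul_const _
    have h5 := (((Real.hasDerivAt_mul_log (ne_of_gt hx0)).add h2).sub h3).sub h4
    exact h5.congr_deriv (by ring)
  have hanti : AntitoneOn f (Set.Icc 0 q) := by
    apply antitoneOn_of_deriv_nonpos (convex_Icc 0 q) hcont.continuousOn
    · intro x hx
      rw [interior_Icc] at hx
      exact (hderiv x hx).differentiableAt.differentiableWithinAt
    · intro x hx
      rw [interior_Icc] at hx
      rw [(hderiv x hx).deriv]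
      have l1 := Real.log_le_log hx.1 hx.2.le
      have l2 := Real.log_le_log h1q (by linarith [hx.2] : 1 - q ≤ 1 - x)
      linarith
  rw [heq a ⟨ha, hab.trans hb⟩, heq b ⟨ha.trans hab, hb⟩]
  exact hanti ⟨ha, hab.trans hb⟩ ⟨ha.trans hab, hb⟩ hab

/-- Sanov-type lower bound for the lower tail of a Binomial(n,q):
`P(S_n ≤ n(q-ε)) ≥ exp(-n·kl(q-ε-1/n, q))/(n+1)`. -/
theorem binomial_lower_tail_lower_bound (q ε : ℝ) (hq : q ∈ Set.Ioo (0 : ℝ) 1)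
    (n : ℕ) (hn : 1 ≤ n) (hε : 1 / (n : ℝ) < ε) (hqε : 0 ≤ q - ε - 1 / (n : ℝ)) :
    Real.exp (-(n : ℝ) * bernKL (q - ε - 1 / (n : ℝ)) q) / (n + 1) ≤
    ∑ k ∈ (Finset.range (n + 1)).filter (fun k : ℕ => (k : ℝ) ≤ n * (q - ε)),
      (n.choose k : ℝ) * q ^ k * (1 - q) ^ (n - k) := by
  obtain ⟨hq0, hq1⟩ := hq
  have hn0 : (0:ℝ) < n := by exact_mod_cast hn
  have hn0' : (n:ℝ) ≠ 0 := ne_of_gt hn0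
  set p : ℝ := q - ε - 1 / (n : ℝ) with hp
  have hε0 : 0 < ε := lt_trans (by positivity) hε
  set k : ℕ := ⌈(n:ℝ) * p⌉₊ with hkdef
  have hnp1 : (n:ℝ) * p + 1 = n * (q - ε) := by
    rw [hp]; field_simp; ring
  have hknp : (n:ℝ) * p ≤ k := Nat.le_ceil _
  have hk_le : (k:ℝ) ≤ n * (q - ε) := by
    have := Nat.ceil_lt_add_one (by positivity : (0:ℝ) ≤ (n:ℝ) * p)
    rw [hnp1] at this
    exact le_of_lt this
  have hk_n : k ≤ n := by
    have : (k:ℝ) ≤ n := by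
      calc (k:ℝ) ≤ n * (q - ε) := hk_le
        _ ≤ n * 1 := by nlinarith
        _ = n := mul_one _
    exact_mod_cast this
  set r : ℝ := (k:ℝ)/n with hrdef
  have hr0 : 0 ≤ r := by positivity
  have hpr : p ≤ r := by
    rw [hrdef, le_div_iff₀ hn0]
    linarith [hknp]
  have hr_ub : r ≤ q - ε := by
    rw [hrdef, div_le_iff₀ hn0]
    linarith [hk_le]
  have hrq : r < q := lt_of_le_of_lt hr_ub (by linarith)
  have h1r : (0:ℝ) < 1 - r := by linarith
  have h1q : (0:ℝ) < 1 - q := by linarith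
  -- exp identity
  have hnr : (n:ℝ) * r = k := by rw [hrdef]; field_simp
  have hn1r : (n:ℝ) * (1 - r) = ((n - k : ℕ) : ℝ) := by
    rw [Nat.cast_sub hk_n, mul_sub, mul_one, hnr]
  have e_a : Real.exp ((k:ℝ) * Real.log (q/r)) = (q/r)^k := by
    rcases Nat.eq_zero_or_pos k with h | h
    · simp [h]
    · have hrpos : 0 < r := by
        rw [hrdef]; positivity
      rw [Real.exp_nat_mul, Real.exp_log (by positivity)]
  have e_b : Real.exp (((n-k:ℕ):ℝ) * Real.log ((1-q)/(1-r))) = ((1-q)/(1-r))^(n-k) := by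
    rw [Real.exp_nat_mul, Real.exp_log (by positivity)]
  have hexp : Real.exp (-(n:ℝ) * bernKL r q) = (q/r)^k * ((1-q)/(1-r))^(n-k) := by
    have hrw : -(n:ℝ) * bernKL r q
        = (k:ℝ) * Real.log (q/r) + ((n-k:ℕ):ℝ) * Real.log ((1-q)/(1-r)) := by
      have l1 : Real.log (q/r) = - Real.log (r/q) := by
        rw [← Real.log_inv, inv_div]
      have l2 : Real.log ((1-q)/(1-r)) = - Real.log ((1-r)/(1-q)) := by
        rw [← Real.log_inv, inv_div]
      rw [l1, l2, ← hnr, ← hn1r]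
      unfold bernKL
      ring
    rw [hrw, Real.exp_add, e_a, e_b]
  -- positivity of the denominator r^k (1-r)^(n-k)
  have hD : 0 < r^k * (1-r)^(n-k) := by
    rcases Nat.eq_zero_or_pos k with h | h
    · rw [h]; simp; positivity
    · have hrpos : 0 < r := by rw [hrdef]; positivity
      positivity
  have hpmf := pmf_max_ge n k hn hk_n
  rw [show 1 - (k:ℝ)/n = 1 - r from rfl] at hpmf
  have h1 : (1:ℝ) ≤ ((n:ℝ)+1) * ((n.choose k : ℝ) * r^k * (1-r)^(n-k)) := by
    rw [div_le_iff₀ (by positivity : (0:ℝ) < (n:ℝ)+1)] at hpmf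
    calc (1:ℝ) ≤ (n.choose k : ℝ) * ((k:ℝ)/n)^k * (1 - r)^(n-k) * ((n:ℝ)+1) := hpmf
      _ = ((n:ℝ)+1) * ((n.choose k : ℝ) * r^k * (1-r)^(n-k)) := by rw [← hrdef]; ring
  have key : Real.exp (-(n:ℝ) * bernKL r q) / ((n:ℝ)+1)
      ≤ (n.choose k : ℝ) * q^k * (1-q)^(n-k) := by
    rw [hexp, div_le_iff₀ (by positivity : (0:ℝ) < (n:ℝ)+1)]
    calc (q/r)^k * ((1-q)/(1-r))^(n-k)
        = (q^k * (1-q)^(n-k)) * (1 / (r^k * (1-r)^(n-k))) := by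
          clear_value r; rw [div_pow, div_pow, one_div, div_mul_div_comm, div_eq_mul_inv, mul_inv]
      _ ≤ (q^k * (1-q)^(n-k)) *
          ((((n:ℝ)+1) * ((n.choose k : ℝ) * r^k * (1-r)^(n-k))) / (r^k * (1-r)^(n-k))) := by
          apply mul_le_mul_of_nonneg_left _ (by positivity)
          exact (div_le_div_iff_of_pos_right hD).mpr h1
      _ = (n.choose k : ℝ) * q^k * (1-q)^(n-k) * ((n:ℝ)+1) := by
          rw [show ((n:ℝ)+1) * ((n.choose k:ℝ) * r^k * (1-r)^(n-k)) = ((n:ℝ)+1) * (n.choose k:ℝ) * (r^k * (1-r)^(n-k)) by ring, mul_div_assoc, div_self hD.ne']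
          ring
  -- KL monotonicity step
  have hklmono : bernKL r q ≤ bernKL p q := bernKL_anti hq0 hq1 hqε hpr (le_of_lt hrq)
  have step1 : Real.exp (-(n:ℝ) * bernKL p q) / ((n:ℝ)+1)
      ≤ Real.exp (-(n:ℝ) * bernKL r q) / ((n:ℝ)+1) := by
    have hmul : -(n:ℝ) * bernKL p q ≤ -(n:ℝ) * bernKL r q := by
      have := mul_le_mul_of_nonneg_left hklmono hn0.le
      linarith
    exact (div_le_div_iff_of_pos_right (by positivity)).mpr (Real.exp_le_exp.mpr hmul)
  -- single term ≤ sum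
  have hk_mem : k ∈ (Finset.range (n + 1)).filter (fun k : ℕ => (k : ℝ) ≤ n * (q - ε)) :=
    Finset.mem_filter.mpr ⟨Finset.mem_range.mpr (by omega), hk_le⟩
  have hterm : (n.choose k : ℝ) * q^k * (1-q)^(n-k)
      ≤ ∑ j ∈ (Finset.range (n + 1)).filter (fun j : ℕ => (j : ℝ) ≤ n * (q - ε)),
        (n.choose j : ℝ) * q ^ j * (1 - q) ^ (n - j) := by
    exact Finset.single_le_sum
      (f := fun j => (n.choose j : ℝ) * q ^ j * (1 - q) ^ (n - j))
      (fun j _ => by positivity) hk_mem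
  calc Real.exp (-(n:ℝ) * bernKL p q) / ((n:ℝ)+1)
      ≤ Real.exp (-(n:ℝ) * bernKL r q) / ((n:ℝ)+1) := step1
    _ ≤ (n.choose k : ℝ) * q^k * (1-q)^(n-k) := key
    _ ≤ _ := hterm
end
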